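/- Let m = (m₀,m₁,m₂) ∈ ℤ³ with m₁,m₂ ≥ 0, m₀ ≥ −1, let p ∈ ℕ, and let G₋ = {(x₁,x₂,a) ∈ G : a < 1, r(x₁,x₂,a) > 1}. Then ∫_{G₋} a^{m₀} |x₁|^{m₁} |x₂|^{m₂} e^{−p·r(x₁,x₂,a)} a⁻¹ dx₁ dx₂ da < ∞ if and only if m₁ + m₂ − 2p < −2 and m₀ + p > 0. -/

import Mathlib

open Real MeasureTheory Set

noncomputable section

abbrev G := ℝ × ℝ × ℝ

/-- `cosh r(x₁,x₂,a) = (a + a⁻¹ + a⁻¹(x₁²+x₂²))/2`. -/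
def coshr (p : G) : ℝ := (p.2.2 + p.2.2⁻¹ + p.2.2⁻¹ * (p.1 ^ 2 + p.2.1 ^ 2)) / 2

/-- The distance from the identity: `r = arcosh (coshr)`. -/
def rG (p : G) : ℝ := Real.log (coshr p + Real.sqrt ((coshr p) ^ 2 - 1))

/-- The right Haar measure `dρ = a⁻¹ dx₁ dx₂ da` (supported on `a > 0`). -/
def ρG : Measure G :=
  (volume : Measure G).withDensity (fun p => ENNReal.ofReal (if 0 < p.2.2 then p.2.2⁻¹ else 0))

/-- `G₋ = {(x₁,x₂,a) : a < 1, r > 1}`. -/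
def Gminus : Set G := {p : G | p.2.2 < 1 ∧ 1 < rG p}

/-! Since `cosh r ≤ e^r ≤ 2 cosh r`, and `a⁻¹(1 + x₁² + x₂²)/2 ≤ cosh r ≤ a⁻¹(1 + x₁² + x₂²)` for
`0 < a ≤ 1`, the integrand against `dρ` is comparable, up to factors `2^{±p}`, to the product
`a^{m₀+p-1} · |x₁|^{m₁} |x₂|^{m₂} (1 + x₁² + x₂²)^{-p}` of a function of `a` and a function of
`(x₁, x₂)`. The first is integrable near `a = 0` iff `m₀ + p > 0`. The second is dominated by
`2^p (1 + ‖x‖)^{m₁+m₂-2p}` and is at least a multiple of `x₁^{m₁+m₂-2p}` on the sector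
`x₁ < x₂ < 2x₁`, so it is integrable on `ℝ²` iff `m₁ + m₂ - 2p < -2`. The divergent cases are
witnessed inside `G₋` by the box `1 < x₁, x₂ < 2`, `0 < a < 1/2` and by the sector
`2 < x₁ < x₂ < 2x₁` times `1/2 < a < 1`. -/

open scoped ENNReal

namespace Real

lemma le_exp_arcosh {x : ℝ} (hx : 1 ≤ x) : x ≤ exp (arcosh x) := by
  rw [exp_arcosh hx]
  linarith [sqrt_nonneg (x ^ 2 - 1)]

lemma exp_arcosh_le {x : ℝ} (hx : 1 ≤ x) : exp (arcosh x) ≤ 2 * x := by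
  have : √(x ^ 2 - 1) ≤ x := calc
    √(x ^ 2 - 1) ≤ √(x ^ 2) := sqrt_le_sqrt (by linarith)
    _ = x := sqrt_sq (by linarith)
  rw [exp_arcosh hx]
  linarith

end Real

def bracketSq (w : ℝ × ℝ) : ℝ := 1 + w.1 ^ 2 + w.2 ^ 2

lemma one_le_bracketSq (w : ℝ × ℝ) : 1 ≤ bracketSq w := by
  unfold bracketSq; nlinarith [sq_nonneg w.1, sq_nonneg w.2]

lemma one_add_norm_sq_le_two_mul_bracketSq (w : ℝ × ℝ) : (1 + ‖w‖) ^ 2 ≤ 2 * bracketSq w := by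
  have hnorm : ‖w‖ ^ 2 ≤ w.1 ^ 2 + w.2 ^ 2 := by
    rw [Prod.norm_def, Real.norm_eq_abs, Real.norm_eq_abs]
    rcases max_cases |w.1| |w.2| with ⟨h, -⟩ | ⟨h, -⟩ <;> rw [h] <;>
      nlinarith [sq_abs w.1, sq_abs w.2]
  unfold bracketSq
  nlinarith [sq_nonneg (1 - ‖w‖)]

section Geometry

variable {q : G}

lemma coshr_eq (q : G) : coshr q = (q.2.2 + bracketSq (q.1, q.2.1) / q.2.2) / 2 := by
  unfold coshr bracketSq; ring

lemma one_le_coshr (ha : 0 < q.2.2) : 1 ≤ coshr q := by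
  have hB := one_le_bracketSq (q.1, q.2.1)
  have key : coshr q - 1 = ((q.2.2 - 1) ^ 2 + (bracketSq (q.1, q.2.1) - 1)) / (2 * q.2.2) := by
    rw [coshr_eq]; field_simp; ring
  have : 0 ≤ coshr q - 1 := key ▸ div_nonneg (by nlinarith) (by positivity)
  linarith

lemma bracketSq_div_le_coshr (ha : 0 < q.2.2) : bracketSq (q.1, q.2.1) / (2 * q.2.2) ≤ coshr q := by
  rw [coshr_eq, mul_comm, ← div_div]
  linarith

lemma coshr_le (ha : 0 < q.2.2) (ha1 : q.2.2 ≤ 1) : coshr q ≤ bracketSq (q.1, q.2.1) / q.2.2 := by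
  have hB := one_le_bracketSq (q.1, q.2.1)
  have : q.2.2 ≤ bracketSq (q.1, q.2.1) / q.2.2 := by
    rw [le_div_iff₀ ha]; nlinarith
  rw [coshr_eq]; linarith

lemma rG_eq_arcosh (q : G) : rG q = arcosh (coshr q) := rfl

lemma bracketSq_div_le_exp_rG (ha : 0 < q.2.2) :
    bracketSq (q.1, q.2.1) / (2 * q.2.2) ≤ exp (rG q) := by
  rw [rG_eq_arcosh]
  exact (bracketSq_div_le_coshr ha).trans (Real.le_exp_arcosh (one_le_coshr ha))

lemma exp_rG_le (ha : 0 < q.2.2) (ha1 : q.2.2 ≤ 1) :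
    exp (rG q) ≤ 2 * (bracketSq (q.1, q.2.1) / q.2.2) := by
  rw [rG_eq_arcosh]
  exact (Real.exp_arcosh_le (one_le_coshr ha)).trans (by linarith [coshr_le ha ha1])

lemma exp_neg_mul_rG (q : G) (p : ℕ) : exp (-(p : ℝ) * rG q) = (exp (rG q))⁻¹ ^ p := by
  rw [neg_mul, ← mul_neg, Real.exp_nat_mul, Real.exp_neg]

lemma exp_neg_mul_rG_le (ha : 0 < q.2.2) (p : ℕ) :
    exp (-(p : ℝ) * rG q) ≤ (2 * q.2.2 / bracketSq (q.1, q.2.1)) ^ p := by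
  have hB := one_le_bracketSq (q.1, q.2.1)
  rw [exp_neg_mul_rG]
  gcongr
  rw [← inv_div]
  exact inv_anti₀ (by positivity) (bracketSq_div_le_exp_rG ha)

lemma le_exp_neg_mul_rG (ha : 0 < q.2.2) (ha1 : q.2.2 ≤ 1) (p : ℕ) :
    (q.2.2 / (2 * bracketSq (q.1, q.2.1))) ^ p ≤ exp (-(p : ℝ) * rG q) := by
  have hB := one_le_bracketSq (q.1, q.2.1)
  rw [exp_neg_mul_rG]
  gcongr
  rw [← inv_div, mul_div_assoc]
  exact inv_anti₀ (exp_pos _) (exp_rG_le ha ha1)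

lemma mem_Gminus_of_six_mul_le (ha : 0 < q.2.2) (ha1 : q.2.2 < 1) (h : 6 * q.2.2 ≤ bracketSq (q.1, q.2.1)) :
    q ∈ Gminus := by
  refine ⟨ha1, Real.exp_lt_exp.1 ?_⟩
  have h3 : 3 ≤ bracketSq (q.1, q.2.1) / (2 * q.2.2) := by
    rw [le_div_iff₀ (by positivity)]; linarith
  linarith [Real.exp_one_lt_d9, bracketSq_div_le_exp_rG ha]

end Geometry

def monomialExp (m₀ : ℤ) (n₁ n₂ p : ℕ) (q : G) : ℝ :=
  q.2.2 ^ m₀ * |q.1| ^ n₁ * |q.2.1| ^ n₂ * exp (-(p : ℝ) * rG q)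

def planarFactor (n₁ n₂ p : ℕ) (w : ℝ × ℝ) : ℝ := |w.1| ^ n₁ * |w.2| ^ n₂ / bracketSq w ^ p

lemma zpow_add_natCast_sub_one {K : Type*} [Field K] {a : K} (ha : a ≠ 0) (m : ℤ) (p : ℕ) :
    a ^ (m + p - 1) = a⁻¹ * a ^ m * a ^ p := by
  rw [zpow_sub_one₀ ha, zpow_add₀ ha, zpow_natCast]; ring

section Comparison

variable {q : G} (m₀ : ℤ) (n₁ n₂ p : ℕ)

lemma inv_mul_monomialExp_le (ha : 0 < q.2.2) :
    q.2.2⁻¹ * monomialExp m₀ n₁ n₂ p q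
      ≤ 2 ^ p * (q.2.2 ^ (m₀ + p - 1) * planarFactor n₁ n₂ p (q.1, q.2.1)) := calc
  _ ≤ q.2.2⁻¹ * (q.2.2 ^ m₀ * |q.1| ^ n₁ * |q.2.1| ^ n₂
        * (2 * q.2.2 / bracketSq (q.1, q.2.1)) ^ p) := by
    unfold monomialExp; gcongr; exact exp_neg_mul_rG_le ha p
  _ = _ := by
    rw [zpow_add_natCast_sub_one ha.ne' m₀ p, div_pow, mul_pow]
    unfold planarFactor; ring

lemma le_inv_mul_monomialExp (ha : 0 < q.2.2) (ha1 : q.2.2 ≤ 1) :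
    q.2.2 ^ (m₀ + p - 1) * planarFactor n₁ n₂ p (q.1, q.2.1) / 2 ^ p
      ≤ q.2.2⁻¹ * monomialExp m₀ n₁ n₂ p q := calc
  _ = q.2.2⁻¹ * (q.2.2 ^ m₀ * |q.1| ^ n₁ * |q.2.1| ^ n₂
        * (q.2.2 / (2 * bracketSq (q.1, q.2.1))) ^ p) := by
    rw [zpow_add_natCast_sub_one ha.ne' m₀ p, div_pow, mul_pow]
    unfold planarFactor; ring
  _ ≤ _ := by
    have := zpow_pos ha m₀
    unfold monomialExp; gcongr; exact le_exp_neg_mul_rG ha ha1 p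

end Comparison

section PlanarFactor

variable (n₁ n₂ p : ℕ)

lemma planarFactor_le (w : ℝ × ℝ) :
    planarFactor n₁ n₂ p w ≤ 2 ^ p * (1 + ‖w‖) ^ ((n₁ + n₂ : ℝ) - 2 * p) := by
  have hN : 0 < 1 + ‖w‖ := by positivity
  have h₁ : |w.1| ≤ 1 + ‖w‖ := by linarith [norm_fst_le w, Real.norm_eq_abs w.1]
  have h₂ : |w.2| ≤ 1 + ‖w‖ := by linarith [norm_snd_le w, Real.norm_eq_abs w.2]
  have hB : (1 + ‖w‖) ^ 2 / 2 ≤ bracketSq w := by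
    linarith [one_add_norm_sq_le_two_mul_bracketSq w]
  calc planarFactor n₁ n₂ p w ≤ (1 + ‖w‖) ^ n₁ * (1 + ‖w‖) ^ n₂ / ((1 + ‖w‖) ^ 2 / 2) ^ p := by
        unfold planarFactor; gcongr
    _ = _ := by
        rw [show (n₁ + n₂ : ℝ) - 2 * p = ((n₁ + n₂ : ℕ) : ℝ) - ((2 * p : ℕ) : ℝ) by push_cast; ring,
          Real.rpow_sub hN, Real.rpow_natCast, Real.rpow_natCast, pow_add, pow_mul, div_pow]
        field_simp

lemma le_planarFactor_of_mem_sector {w : ℝ × ℝ} (h1 : 1 ≤ w.1) (h2 : w.1 < w.2)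
    (h3 : w.2 < 2 * w.1) :
    w.1 ^ ((n₁ + n₂ : ℝ) - 2 * p) / 6 ^ p ≤ planarFactor n₁ n₂ p w := by
  have hx : 0 < w.1 := by linarith
  have hB : bracketSq w ≤ 6 * w.1 ^ 2 := by unfold bracketSq; nlinarith
  calc w.1 ^ ((n₁ + n₂ : ℝ) - 2 * p) / 6 ^ p = w.1 ^ n₁ * w.1 ^ n₂ / (6 * w.1 ^ 2) ^ p := by
        rw [show (n₁ + n₂ : ℝ) - 2 * p = ((n₁ + n₂ : ℕ) : ℝ) - ((2 * p : ℕ) : ℝ) by push_cast; ring,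
          Real.rpow_sub hx, Real.rpow_natCast, Real.rpow_natCast, pow_add, pow_mul, mul_pow]
        field_simp
    _ ≤ planarFactor n₁ n₂ p w := by
        have := one_le_bracketSq w
        unfold planarFactor
        rw [abs_of_pos hx, abs_of_pos (hx.trans h2)]
        gcongr
        exact mul_nonneg (pow_nonneg hx.le _) (pow_nonneg (hx.trans h2).le _)

lemma le_planarFactor_of_mem_square {w : ℝ × ℝ} (hw : w ∈ Ioo (1 : ℝ) 2 ×ˢ Ioo (1 : ℝ) 2) :
    1 / 9 ^ p ≤ planarFactor n₁ n₂ p w := by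
  obtain ⟨⟨hx1, hx2⟩, hy1, hy2⟩ := hw
  have hB : bracketSq w ≤ 9 := by unfold bracketSq; nlinarith
  have := one_le_bracketSq w
  unfold planarFactor
  rw [abs_of_pos (by linarith), abs_of_pos (by linarith)]
  gcongr
  exact one_le_mul_of_one_le_of_one_le (one_le_pow₀ hx1.le) (one_le_pow₀ hy1.le)

lemma planarFactor_nonneg (w : ℝ × ℝ) : 0 ≤ planarFactor n₁ n₂ p w := by
  unfold planarFactor bracketSq; positivity

end PlanarFactor

section PointwiseBounds

variable {q : G} {m₀ : ℤ} {n₁ n₂ p : ℕ}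

lemma inv_mul_monomialExp_le_one_add_norm_rpow (hk : 0 < m₀ + p) (ha : 0 < q.2.2)
    (ha1 : q.2.2 ≤ 1) :
    q.2.2⁻¹ * monomialExp m₀ n₁ n₂ p q
      ≤ 4 ^ p * (1 + ‖(q.1, q.2.1)‖) ^ ((n₁ + n₂ : ℝ) - 2 * p) := calc
  _ ≤ 2 ^ p * (q.2.2 ^ (m₀ + p - 1) * planarFactor n₁ n₂ p (q.1, q.2.1)) :=
      inv_mul_monomialExp_le m₀ n₁ n₂ p ha
  _ ≤ 2 ^ p * planarFactor n₁ n₂ p (q.1, q.2.1) := by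
      gcongr
      exact mul_le_of_le_one_left (planarFactor_nonneg ..) (zpow_le_one₀ ha ha1 (by omega))
  _ ≤ 2 ^ p * (2 ^ p * (1 + ‖(q.1, q.2.1)‖) ^ ((n₁ + n₂ : ℝ) - 2 * p)) := by
      gcongr; exact planarFactor_le n₁ n₂ p _
  _ = _ := by rw [← mul_assoc, ← mul_pow]; norm_num

lemma div_le_inv_mul_monomialExp_of_mem_square (hw : (q.1, q.2.1) ∈ Ioo (1 : ℝ) 2 ×ˢ Ioo (1 : ℝ) 2)
    (ha : 0 < q.2.2) (ha1 : q.2.2 ≤ 1) :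
    q.2.2 ^ (m₀ + p - 1) / 18 ^ p ≤ q.2.2⁻¹ * monomialExp m₀ n₁ n₂ p q := calc
  _ = q.2.2 ^ (m₀ + p - 1) * (1 / 9 ^ p) / 2 ^ p := by
      rw [show (18 : ℝ) ^ p = 9 ^ p * 2 ^ p by rw [← mul_pow]; norm_num]; ring
  _ ≤ q.2.2 ^ (m₀ + p - 1) * planarFactor n₁ n₂ p (q.1, q.2.1) / 2 ^ p := by
      have := zpow_pos ha (m₀ + p - 1)
      gcongr; exact le_planarFactor_of_mem_square n₁ n₂ p hw
  _ ≤ _ := le_inv_mul_monomialExp m₀ n₁ n₂ p ha ha1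

lemma mul_div_le_inv_mul_monomialExp_of_mem_sector (h1 : 1 ≤ q.1) (h2 : q.1 < q.2.1)
    (h3 : q.2.1 < 2 * q.1) (ha : 0 < q.2.2) (ha1 : q.2.2 ≤ 1) :
    q.1 ^ ((n₁ + n₂ : ℝ) - 2 * p) * (q.2.2 ^ (m₀ + p - 1) / 12 ^ p)
      ≤ q.2.2⁻¹ * monomialExp m₀ n₁ n₂ p q := calc
  _ = q.2.2 ^ (m₀ + p - 1) * (q.1 ^ ((n₁ + n₂ : ℝ) - 2 * p) / 6 ^ p) / 2 ^ p := by
      rw [show (12 : ℝ) ^ p = 6 ^ p * 2 ^ p by rw [← mul_pow]; norm_num]; ring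
  _ ≤ q.2.2 ^ (m₀ + p - 1) * planarFactor n₁ n₂ p (q.1, q.2.1) / 2 ^ p := by
      have := zpow_pos ha (m₀ + p - 1)
      gcongr; exact le_planarFactor_of_mem_sector (w := (q.1, q.2.1)) n₁ n₂ p h1 h2 h3
  _ ≤ _ := le_inv_mul_monomialExp m₀ n₁ n₂ p ha ha1

end PointwiseBounds

@[fun_prop]
lemma measurable_rG : Measurable rG := by
  unfold rG coshr; fun_prop

lemma measurableSet_Gminus : MeasurableSet Gminus :=
  (measurableSet_lt measurable_snd.snd measurable_const).inter
    (measurableSet_lt measurable_const measurable_rG)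

@[fun_prop]
lemma measurable_monomialExp (m₀ : ℤ) (n₁ n₂ p : ℕ) : Measurable (monomialExp m₀ n₁ n₂ p) := by
  unfold monomialExp; fun_prop

lemma setLIntegral_ρG {s : Set G} (hs : MeasurableSet s) {f : G → ℝ} (hf : Measurable f) :
    ∫⁻ q in s, ENNReal.ofReal (f q) ∂ρG
      = ∫⁻ q in s ∩ {q | 0 < q.2.2}, ENNReal.ofReal (q.2.2⁻¹ * f q) := by
  have hpos : MeasurableSet {q : G | 0 < q.2.2} := measurableSet_lt measurable_const (by fun_prop)
  rw [ρG, setLIntegral_withDensity_eq_setLIntegral_mul _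
    ((Measurable.ite hpos (by fun_prop) measurable_const).ennreal_ofReal) hf.ennreal_ofReal hs,
    inter_comm, ← setLIntegral_indicator hpos]
  refine setLIntegral_congr_fun hs fun q _ => ?_
  by_cases ha : 0 < q.2.2
  · simp [ha, ENNReal.ofReal_mul (inv_nonneg.2 ha.le)]
  · simp [ha]

lemma setLIntegral_ofReal_eq_top {α : Type*} [MeasurableSpace α] {μ : Measure α} {f : α → ℝ}
    {s : Set α} (hs : MeasurableSet s) (hf : AEStronglyMeasurable f (μ.restrict s))
    (h0 : ∀ x ∈ s, 0 ≤ f x) (hf_int : ¬ IntegrableOn f s μ) :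
    ∫⁻ x in s, ENNReal.ofReal (f x) ∂μ = ∞ := by
  by_contra hne
  exact hf_int ((lintegral_ofReal_ne_top_iff_integrable hf (ae_restrict_of_forall_mem hs h0)).1 hne)

lemma lintegral_Ioi_rpow_eq_top {c s : ℝ} (hc : 0 < c) (hs : -1 ≤ s) :
    ∫⁻ x in Ioi c, ENNReal.ofReal (x ^ s) = ∞ :=
  setLIntegral_ofReal_eq_top measurableSet_Ioi (by fun_prop)
    (fun x hx => Real.rpow_nonneg (hc.trans hx).le s)
    (by rw [integrableOn_Ioi_rpow_iff hc]; linarith)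

lemma lintegral_Ioo_rpow_eq_top {c s : ℝ} (hc : 0 < c) (hs : s ≤ -1) :
    ∫⁻ x in Ioo 0 c, ENNReal.ofReal (x ^ s) = ∞ :=
  setLIntegral_ofReal_eq_top measurableSet_Ioo (by fun_prop)
    (fun x hx => Real.rpow_nonneg hx.1.le s)
    (by rw [intervalIntegral.integrableOn_Ioo_rpow_iff hc]; linarith)

def sector (c : ℝ) : Set (ℝ × ℝ) := {w | c < w.1 ∧ w.2 ∈ Ioo w.1 (2 * w.1)}

lemma measurableSet_sector (c : ℝ) : MeasurableSet (sector c) :=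
  (measurableSet_lt measurable_const measurable_fst).inter
    ((measurableSet_lt measurable_fst measurable_snd).inter
      (measurableSet_lt measurable_snd (by fun_prop)))

lemma setLIntegral_sector (c : ℝ) {g : ℝ → ℝ≥0∞} (hg : Measurable g) :
    ∫⁻ w in sector c, g w.1 = ∫⁻ x in Ioi c, ENNReal.ofReal x * g x := by
  rw [← lintegral_indicator (measurableSet_sector c), Measure.volume_eq_prod,
    lintegral_prod _ (by exact ((hg.comp measurable_fst).indicator (measurableSet_sector c)).aemeasurable),
    ← lintegral_indicator measurableSet_Ioi]
  refine lintegral_congr fun x => ?_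
  by_cases hx : c < x
  · have hfiber : (fun y => (sector c).indicator (fun w => g w.1) (x, y))
        = (Ioo x (2 * x)).indicator fun _ => g x := by
      ext y; simp [sector, indicator_apply, hx]
    rw [hfiber, lintegral_indicator_const measurableSet_Ioo, Real.volume_Ioo,
      indicator_of_mem (mem_Ioi.2 hx), mul_comm]
    ring_nf
  · simp [sector, hx]

lemma lintegral_sector_rpow_eq_top {c s : ℝ} (hc : 0 < c) (hs : -2 ≤ s) :
    ∫⁻ w in sector c, ENNReal.ofReal (w.1 ^ s) = ∞ := by
  rw [setLIntegral_sector c (g := fun x => ENNReal.ofReal (x ^ s)) (by fun_prop),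
    ← lintegral_Ioi_rpow_eq_top hc (show -1 ≤ s + 1 by linarith)]
  refine setLIntegral_congr_fun measurableSet_Ioi fun x hx => ?_
  rw [← ENNReal.ofReal_mul (hc.trans hx).le, Real.rpow_add_one (hc.trans hx).ne', mul_comm]

def slab (T : Set (ℝ × ℝ)) (I : Set ℝ) : Set G := {q | (q.1, q.2.1) ∈ T ∧ q.2.2 ∈ I}

lemma setLIntegral_slab (T : Set (ℝ × ℝ)) (I : Set ℝ) {g : ℝ × ℝ → ℝ≥0∞} {h : ℝ → ℝ≥0∞}
    (hg : Measurable g) (hh : Measurable h) :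
    ∫⁻ q in slab T I, g (q.1, q.2.1) * h q.2.2 = (∫⁻ w in T, g w) * ∫⁻ a in I, h a := by
  rw [← volume_preserving_prodAssoc.setLIntegral_comp_preimage_emb
    MeasurableEquiv.prodAssoc.measurableEmbedding]
  rw [show MeasurableEquiv.prodAssoc ⁻¹' slab T I = T ×ˢ I from rfl, Measure.volume_eq_prod,
    ← Measure.prod_restrict]
  exact lintegral_prod_mul hg.aemeasurable hh.aemeasurable

section Integrability

variable {m₀ : ℤ} {n₁ n₂ p : ℕ}

lemma lintegral_monomialExp_lt_top (ht : (n₁ + n₂ : ℤ) - 2 * p < -2) (hk : 0 < m₀ + p) :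
    ∫⁻ q in Gminus ∩ {q | 0 < q.2.2}, ENNReal.ofReal (q.2.2⁻¹ * monomialExp m₀ n₁ n₂ p q) < ∞ := by
  set s : ℝ := (n₁ + n₂ : ℝ) - 2 * p
  have hr : (Module.finrank ℝ (ℝ × ℝ) : ℝ) < -s := by
    have : ((n₁ + n₂ : ℤ) : ℝ) - 2 * p < -2 := by exact_mod_cast ht
    simp only [Module.finrank_prod, Module.finrank_self, s]
    push_cast at this ⊢
    linarith
  have hbound : ∀ q ∈ slab univ (Ioo 0 1), ENNReal.ofReal (q.2.2⁻¹ * monomialExp m₀ n₁ n₂ p q)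
      ≤ ENNReal.ofReal (4 ^ p * (1 + ‖(q.1, q.2.1)‖) ^ s) * 1 := by
    rintro q ⟨-, ha, ha1⟩
    rw [mul_one]
    exact ENNReal.ofReal_le_ofReal (inv_mul_monomialExp_le_one_add_norm_rpow hk ha ha1.le)
  have hplanar := finite_integral_one_add_norm (μ := (volume : Measure (ℝ × ℝ))) hr
  rw [neg_neg] at hplanar
  calc _ ≤ ∫⁻ q in slab univ (Ioo 0 1), ENNReal.ofReal (q.2.2⁻¹ * monomialExp m₀ n₁ n₂ p q) :=
        lintegral_mono_set fun q hq => ⟨trivial, hq.2, hq.1.1⟩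
    _ ≤ ∫⁻ q in slab univ (Ioo 0 1), ENNReal.ofReal (4 ^ p * (1 + ‖(q.1, q.2.1)‖) ^ s) * 1 :=
        setLIntegral_mono (by fun_prop) hbound
    _ = (∫⁻ w : ℝ × ℝ, ENNReal.ofReal (4 ^ p * (1 + ‖w‖) ^ s)) * ∫⁻ _ in Ioo (0 : ℝ) 1, 1 := by
        rw [setLIntegral_slab (g := fun w => ENNReal.ofReal (4 ^ p * (1 + ‖w‖) ^ s))
          (h := fun _ => 1) _ _ (by fun_prop) measurable_const, Measure.restrict_univ]
    _ < ∞ := by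
        simp_rw [ENNReal.ofReal_mul (by positivity : (0 : ℝ) ≤ 4 ^ p)]
        rw [lintegral_const_mul _ (by fun_prop), setLIntegral_one, Real.volume_Ioo]
        exact ENNReal.mul_lt_top (ENNReal.mul_lt_top ENNReal.ofReal_lt_top hplanar)
          ENNReal.ofReal_lt_top

lemma lintegral_monomialExp_eq_top_of_nonpos (hk : m₀ + p ≤ 0) :
    ∫⁻ q in Gminus ∩ {q | 0 < q.2.2}, ENNReal.ofReal (q.2.2⁻¹ * monomialExp m₀ n₁ n₂ p q) = ∞ := by
  set T : Set (ℝ × ℝ) := Ioo 1 2 ×ˢ Ioo 1 2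
  set I : Set ℝ := Ioo 0 (1 / 2)
  have hsub : slab T I ⊆ Gminus ∩ {q | 0 < q.2.2} := by
    rintro q ⟨⟨⟨hx, -⟩, hy, -⟩, ha, ha2⟩
    refine ⟨mem_Gminus_of_six_mul_le ha (by linarith) ?_, ha⟩
    unfold bracketSq; nlinarith
  have hle : ∀ q ∈ slab T I, 1 * ENNReal.ofReal (q.2.2 ^ ((m₀ + p - 1 : ℤ) : ℝ) / 18 ^ p)
      ≤ ENNReal.ofReal (q.2.2⁻¹ * monomialExp m₀ n₁ n₂ p q) := by
    rintro q ⟨hw, ha, ha2⟩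
    rw [one_mul, Real.rpow_intCast]
    exact ENNReal.ofReal_le_ofReal (div_le_inv_mul_monomialExp_of_mem_square hw ha (by linarith))
  have hT : (volume : Measure (ℝ × ℝ)) T = 1 := by
    rw [Measure.volume_eq_prod, Measure.prod_prod, Real.volume_Ioo]; norm_num
  have hI : ∫⁻ a in I, ENNReal.ofReal (a ^ ((m₀ + p - 1 : ℤ) : ℝ) / 18 ^ p) = ∞ := by
    simp_rw [div_eq_inv_mul, ENNReal.ofReal_mul (by positivity : (0 : ℝ) ≤ (18 ^ p)⁻¹)]
    rw [lintegral_const_mul _ (by fun_prop),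
      lintegral_Ioo_rpow_eq_top (by norm_num) (by exact_mod_cast (by omega : m₀ + p - 1 ≤ -1))]
    exact ENNReal.mul_top (by simp)
  refine top_unique ?_
  calc ∞ = (∫⁻ _ in T, 1) * ∫⁻ a in I, ENNReal.ofReal (a ^ ((m₀ + p - 1 : ℤ) : ℝ) / 18 ^ p) := by
        rw [hI, setLIntegral_one, hT, one_mul]
    _ = _ := (setLIntegral_slab (g := fun _ => 1) T I measurable_const (by fun_prop)).symm
    _ ≤ _ := setLIntegral_mono (by fun_prop) hle
    _ ≤ _ := lintegral_mono_set hsub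

lemma lintegral_monomialExp_eq_top_of_ge (ht : -2 ≤ (n₁ + n₂ : ℤ) - 2 * p) :
    ∫⁻ q in Gminus ∩ {q | 0 < q.2.2}, ENNReal.ofReal (q.2.2⁻¹ * monomialExp m₀ n₁ n₂ p q) = ∞ := by
  set s : ℝ := (n₁ + n₂ : ℝ) - 2 * p
  set I : Set ℝ := Ioo (1 / 2) 1
  have hsub : slab (sector 2) I ⊆ Gminus ∩ {q | 0 < q.2.2} := by
    rintro q ⟨⟨hx, hxy, -⟩, ha, ha1⟩
    have ha0 : 0 < q.2.2 := by linarith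
    refine ⟨mem_Gminus_of_six_mul_le ha0 ha1 ?_, ha0⟩
    unfold bracketSq; dsimp only at hx hxy; nlinarith
  have hle : ∀ q ∈ slab (sector 2) I,
      ENNReal.ofReal (q.1 ^ s) * ENNReal.ofReal (q.2.2 ^ (m₀ + p - 1) / 12 ^ p)
        ≤ ENNReal.ofReal (q.2.2⁻¹ * monomialExp m₀ n₁ n₂ p q) := by
    rintro q ⟨⟨hx, hxy, hy⟩, ha, ha1⟩
    have hx1 : 1 ≤ q.1 := (one_lt_two.trans hx).le
    rw [← ENNReal.ofReal_mul (Real.rpow_nonneg (zero_le_one.trans hx1) _)]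
    exact ENNReal.ofReal_le_ofReal
      (mul_div_le_inv_mul_monomialExp_of_mem_sector hx1 hxy hy (by linarith) ha1.le)
  have hI : ∫⁻ a in I, ENNReal.ofReal (a ^ (m₀ + p - 1) / 12 ^ p) ≠ 0 := by
    refine ((setLIntegral_pos_iff (by fun_prop)).2 ?_).ne'
    rw [inter_eq_right.2 fun a ha => ?_, Real.volume_Ioo]
    · norm_num
    · exact (ENNReal.ofReal_pos.2 (div_pos (zpow_pos (by linarith [ha.1]) _) (by positivity))).ne'
  refine top_unique ?_
  calc ∞ = (∫⁻ w in sector 2, ENNReal.ofReal (w.1 ^ s))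
          * ∫⁻ a in I, ENNReal.ofReal (a ^ (m₀ + p - 1) / 12 ^ p) := by
        rw [lintegral_sector_rpow_eq_top two_pos (by simp only [s]; exact_mod_cast ht),
          ENNReal.top_mul hI]
    _ = _ := (setLIntegral_slab (sector 2) I (by fun_prop) (by fun_prop)).symm
    _ ≤ _ := setLIntegral_mono (by fun_prop) hle
    _ ≤ _ := lintegral_mono_set hsub

end Integrability

theorem integrability_on_Gminus_general (m₀ m₁ m₂ : ℤ) (hm₁ : 0 ≤ m₁) (hm₂ : 0 ≤ m₂)
    (p : ℕ) :
    (∫⁻ x in Gminus, ENNReal.ofReal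
        (x.2.2 ^ m₀ * |x.1| ^ m₁ * |x.2.1| ^ m₂ * Real.exp (-(p : ℝ) * rG x)) ∂ρG) < ⊤ ↔
      (m₁ + m₂ - 2 * (p : ℤ) < -2 ∧ 0 < m₀ + (p : ℤ)) := by
  lift m₁ to ℕ using hm₁ with n₁
  lift m₂ to ℕ using hm₂ with n₂
  simp only [zpow_natCast]
  change ∫⁻ q in Gminus, ENNReal.ofReal (monomialExp m₀ n₁ n₂ p q) ∂ρG < ⊤ ↔ _
  rw [setLIntegral_ρG measurableSet_Gminus (measurable_monomialExp m₀ n₁ n₂ p)]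
  refine ⟨fun hfin => ⟨lt_of_not_ge fun ht => ?_, lt_of_not_ge fun hk => ?_⟩,
    fun ⟨ht, hk⟩ => lintegral_monomialExp_lt_top ht hk⟩
  · exact hfin.ne (lintegral_monomialExp_eq_top_of_ge ht)
  · exact hfin.ne (lintegral_monomialExp_eq_top_of_nonpos hk)

/-- Lemma 2.2 (ii): for `m = (m₀,m₁,m₂) ∈ ℤ³` with `m₁,m₂ ≥ 0`, `m₀ ≥ -1`, and `p ∈ ℕ`,
the function `x^m e^{-p r}` is integrable on `G₋` with respect to `ρ` iff
`m₁ + m₂ - 2p < -2` and `m₀ + p > 0`. -/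
theorem integrability_on_Gminus (m₀ m₁ m₂ : ℤ) (hm₁ : 0 ≤ m₁) (hm₂ : 0 ≤ m₂) (hm₀ : -1 ≤ m₀)
    (p : ℕ) :
    (∫⁻ x in Gminus, ENNReal.ofReal
        (x.2.2 ^ m₀ * |x.1| ^ m₁ * |x.2.1| ^ m₂ * Real.exp (-(p : ℝ) * rG x)) ∂ρG) < ⊤ ↔
      (m₁ + m₂ - 2 * (p : ℤ) < -2 ∧ 0 < m₀ + (p : ℤ)) :=
  integrability_on_Gminus_general m₀ m₁ m₂ hm₁ hm₂ p
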